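/- Let a₂ > 0, n ≥ 1 and τ ∈ ℝ. Let Ŷ₁ and Ŷ₂ be real random variables that are (a₂, n)-concentrated around m₁ and m₂ respectively, with τ < m₁ < m₂. Then P( {Ŷ₁ ≤ τ} ∪ {Ŷ₂ ≤ Ŷ₁} ) ≤ 6·exp( −(n/4)·min{ a₂(m₁ − τ)², a₂(m₂ − m₁)² } ). -/

import Mathlib

/-! Arm 1 looks feasible only if `Ŷ₁` deviates from `m₁` by `m₁ − τ`, and `Ŷ₂ ≤ Ŷ₁` forces one of
the two estimates to deviate by half the gap `m₂ − m₁`. A union bound over these three tail events,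
each bounded by concentration, gives `2 + 2 + 2` exponentials, all dominated by the smallest rate. -/

open MeasureTheory Real

/-- A real random variable `X` on `(Ω, P)` is `(a, n)`-concentrated around `m` if
`P(|X − m| ≥ Δ) ≤ 2·exp(−a·n·Δ²)` for every `Δ > 0`. -/
def ConcentratedAround {Ω : Type*} [MeasurableSpace Ω] (P : Measure Ω)
    (a : ℝ) (n : ℕ) (X : Ω → ℝ) (m : ℝ) : Prop :=
  ∀ Δ : ℝ, 0 < Δ →
    P {ω | Δ ≤ |X ω - m|} ≤ ENNReal.ofReal (2 * Real.exp (-(a * n * Δ ^ 2)))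

namespace ConcentratedAround

variable {Ω : Type*} [MeasurableSpace Ω] {P : Measure Ω} {a : ℝ} {n : ℕ} {X Y : Ω → ℝ}
  {m m' : ℝ}

theorem measure_setOf_le_le (hX : ConcentratedAround P a n X m) {t : ℝ} (ht : t < m) :
    P {ω | X ω ≤ t} ≤ ENNReal.ofReal (2 * exp (-(a * n * (m - t) ^ 2))) := by
  refine (measure_mono fun ω (hω : X ω ≤ t) => ?_).trans (hX (m - t) (sub_pos.2 ht))
  show m - t ≤ |X ω - m|
  rw [abs_sub_comm]
  exact (sub_le_sub_left hω m).trans (le_abs_self _)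

theorem measure_setOf_swap_le (hX : ConcentratedAround P a n X m)
    (hY : ConcentratedAround P a n Y m') (h : m < m') :
    P {ω | Y ω ≤ X ω} ≤ ENNReal.ofReal (4 * exp (-(a * n * ((m' - m) / 2) ^ 2))) := by
  set Δ := (m' - m) / 2 with hΔ_def
  have hΔ : 0 < Δ := half_pos (sub_pos.2 h)
  have hsplit : {ω | Y ω ≤ X ω} ⊆ {ω | Δ ≤ |X ω - m|} ∪ {ω | Δ ≤ |Y ω - m'|} := by
    intro ω (hω : Y ω ≤ X ω)
    by_contra! hclose
    simp only [Set.mem_union, Set.mem_ofPred_eq, not_or, not_le, abs_lt] at hclose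
    linarith [hclose.1.2, hclose.2.1]
  calc P {ω | Y ω ≤ X ω}
      ≤ P {ω | Δ ≤ |X ω - m|} + P {ω | Δ ≤ |Y ω - m'|} :=
        (measure_mono hsplit).trans (measure_union_le _ _)
    _ ≤ ENNReal.ofReal (2 * exp (-(a * n * Δ ^ 2)))
          + ENNReal.ofReal (2 * exp (-(a * n * Δ ^ 2))) :=
        add_le_add (hX Δ hΔ) (hY Δ hΔ)
    _ = ENNReal.ofReal (4 * exp (-(a * n * Δ ^ 2))) := by
        rw [← ENNReal.ofReal_add (by positivity) (by positivity)]
        ring_nf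

end ConcentratedAround

theorem two_arm_error_infeasible {Ω : Type*} [MeasurableSpace Ω] (P : Measure Ω)
    (a₂ : ℝ) (n : ℕ) (ha₂ : 0 < a₂)
    (τ m₁ m₂ : ℝ) (hm₁ : τ < m₁) (hm₂ : m₁ < m₂) (Y₁ Y₂ : Ω → ℝ)
    (hY₁ : ConcentratedAround P a₂ n Y₁ m₁) (hY₂ : ConcentratedAround P a₂ n Y₂ m₂) :
    P ({ω | Y₁ ω ≤ τ} ∪ {ω | Y₂ ω ≤ Y₁ ω})
      ≤ ENNReal.ofReal (6 * Real.exp (-((n : ℝ) / 4 *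
          min (a₂ * (m₁ - τ) ^ 2) (a₂ * (m₂ - m₁) ^ 2)))) := by
  set M : ℝ := (n : ℝ) / 4 * min (a₂ * (m₁ - τ) ^ 2) (a₂ * (m₂ - m₁) ^ 2)
  have hfeasible : M ≤ a₂ * n * (m₁ - τ) ^ 2 :=
    calc M ≤ (n : ℝ) / 4 * (a₂ * (m₁ - τ) ^ 2) :=
          mul_le_mul_of_nonneg_left (min_le_left _ _) (by positivity)
      _ ≤ a₂ * n * (m₁ - τ) ^ 2 := by nlinarith [mul_nonneg ha₂.le (sq_nonneg (m₁ - τ))]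
  have hswap : M ≤ a₂ * n * ((m₂ - m₁) / 2) ^ 2 :=
    calc M ≤ (n : ℝ) / 4 * (a₂ * (m₂ - m₁) ^ 2) :=
          mul_le_mul_of_nonneg_left (min_le_right _ _) (by positivity)
      _ = a₂ * n * ((m₂ - m₁) / 2) ^ 2 := by ring
  calc P ({ω | Y₁ ω ≤ τ} ∪ {ω | Y₂ ω ≤ Y₁ ω})
      ≤ P {ω | Y₁ ω ≤ τ} + P {ω | Y₂ ω ≤ Y₁ ω} := measure_union_le _ _
    _ ≤ ENNReal.ofReal (2 * exp (-M)) + ENNReal.ofReal (4 * exp (-M)) := by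
        gcongr
        · refine (hY₁.measure_setOf_le_le hm₁).trans ?_
          gcongr
        · refine (hY₁.measure_setOf_swap_le hY₂ hm₂).trans ?_
          gcongr
    _ = ENNReal.ofReal (6 * exp (-M)) := by
        rw [← ENNReal.ofReal_add (by positivity) (by positivity)]
        ring_nf
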